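/- arXiv:2401.06763 — 3 statements merged into one kernel-verified Lean document; each statement's English description precedes it below -/
import Mathlib

section
/- Let m ≥ 1 and k ≥ 2 be integers, let w : Fin m → ℕ with w i ≥ 1 for every i, and set M = k·(m+1). Then there exists a subset S ⊆ Fin m with ∏_{i∈S} w i = k if and only if there exists a subset S ⊆ Fin m such that ∑_{i∈S} ⌊M·log₂(w i)⌋ ≤ ⌈M·log₂ k⌉ and k ≤ ∏_{i∈S} w i. -/
open Real Finset

private lemma logb_prod_nat (m : ℕ) (w : Fin m → ℕ) (hw : ∀ i, 1 ≤ w i)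
    (S : Finset (Fin m)) :
    Real.logb 2 ((∏ i ∈ S, w i : ℕ) : ℝ) = ∑ i ∈ S, Real.logb 2 (w i) := by
  push_cast
  exact Real.logb_prod S _ (fun i _ => by
    have := hw i; positivity)

private lemma key_ineq (k : ℕ) (hk : 2 ≤ k) :
    1 ≤ (k : ℝ) * (Real.logb 2 (k + 1) - Real.logb 2 k) := by
  have hk0 : (0:ℝ) < k := by positivity
  have hdiv : Real.logb 2 (k + 1) - Real.logb 2 k
      = Real.logb 2 (((k : ℝ) + 1) / k) := by
    rw [Real.logb_div (by positivity) (ne_of_gt hk0)]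
  have hpow : (2:ℝ) ≤ (((k:ℝ) + 1) / k) ^ (k:ℕ) := by
    have h1 : (1:ℝ) + (k:ℕ) * (1 / (k:ℝ)) ≤ (1 + 1 / (k:ℝ)) ^ (k:ℕ) :=
      one_add_mul_le_pow (le_trans (by norm_num) (by positivity : (0:ℝ) ≤ 1 / (k:ℝ))) k
    have h2 : (k:ℝ) * (1 / (k:ℝ)) = 1 := by field_simp
    have h3 : (1:ℝ) + 1 / (k:ℝ) = ((k:ℝ) + 1) / k := by field_simp
    rw [h2, h3] at h1
    linarith
  have hlog : (1:ℝ) ≤ Real.logb 2 ((((k:ℝ) + 1) / k) ^ (k:ℕ)) := by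
    calc (1:ℝ) = Real.logb 2 2 := (Real.logb_self_eq_one (by norm_num)).symm
    _ ≤ _ := Real.logb_le_logb_of_le (by norm_num) (by norm_num) hpow
  rw [Real.logb_pow] at hlog
  rw [hdiv]
  linarith

/-- Equivalence at the core of the Subset-Product reduction. -/
theorem subset_product_reduction_equiv
    (m k : ℕ) (hm : 1 ≤ m) (hk : 2 ≤ k)
    (w : Fin m → ℕ) (hw : ∀ i, 1 ≤ w i)
    (M : ℕ) (hM : M = k * (m + 1)) :
    (∃ S : Finset (Fin m), ∏ i ∈ S, w i = k) ↔
    (∃ S : Finset (Fin m),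
      (∑ i ∈ S, ⌊(M : ℝ) * Real.logb 2 (w i)⌋) ≤ ⌈(M : ℝ) * Real.logb 2 k⌉ ∧
      k ≤ ∏ i ∈ S, w i) := by
  constructor
  · rintro ⟨S, hS⟩
    refine ⟨S, ?_, le_of_eq hS.symm⟩
    have h1 : ((∑ i ∈ S, ⌊(M : ℝ) * Real.logb 2 (w i)⌋ : ℤ) : ℝ)
        ≤ (M : ℝ) * Real.logb 2 k := by
      push_cast
      calc ∑ i ∈ S, ((⌊(M : ℝ) * Real.logb 2 (w i)⌋ : ℤ) : ℝ)
          ≤ ∑ i ∈ S, (M : ℝ) * Real.logb 2 (w i) :=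
            Finset.sum_le_sum (fun i _ => Int.floor_le _)
        _ = (M : ℝ) * ∑ i ∈ S, Real.logb 2 (w i) := by rw [Finset.mul_sum]
        _ = (M : ℝ) * Real.logb 2 k := by
            rw [← logb_prod_nat m w hw S, hS]
    have h2 := Int.le_ceil ((M : ℝ) * Real.logb 2 k)
    exact_mod_cast h1.trans h2
  · rintro ⟨S, h1, h2⟩
    refine ⟨S, le_antisymm ?_ h2⟩
    by_contra hgt
    push_neg at hgt
    -- so k + 1 ≤ ∏ i ∈ S, w i
    have hP : k + 1 ≤ ∏ i ∈ S, w i := hgt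
    -- Real bounds
    have hfloor : ∀ i ∈ S, (M : ℝ) * Real.logb 2 (w i) - 1
        ≤ ((⌊(M : ℝ) * Real.logb 2 (w i)⌋ : ℤ) : ℝ) :=
      fun i _ => (Int.sub_one_lt_floor _).le
    have hsumfloor :
        (M : ℝ) * Real.logb 2 ((∏ i ∈ S, w i : ℕ) : ℝ) - S.card
        ≤ ((∑ i ∈ S, ⌊(M : ℝ) * Real.logb 2 (w i)⌋ : ℤ) : ℝ) := by
      have := Finset.sum_le_sum hfloor
      rw [Finset.sum_sub_distrib, Finset.sum_const, ← Finset.mul_sum,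
        ← logb_prod_nat m w hw S] at this
      simp only [nsmul_eq_mul, mul_one] at this
      push_cast
      push_cast at this
      linarith
    have hceil : ((⌈(M : ℝ) * Real.logb 2 k⌉ : ℤ) : ℝ)
        < (M : ℝ) * Real.logb 2 k + 1 := Int.ceil_lt_add_one _
    have hcast : ((∑ i ∈ S, ⌊(M : ℝ) * Real.logb 2 (w i)⌋ : ℤ) : ℝ)
        ≤ ((⌈(M : ℝ) * Real.logb 2 k⌉ : ℤ) : ℝ) := by exact_mod_cast h1
    have hcard : (S.card : ℝ) ≤ m := by
      exact_mod_cast Finset.card_le_card (Finset.subset_univ S) |>.trans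
        (le_of_eq (Finset.card_univ (α := Fin m) ▸ (Fintype.card_fin m)))
    have hmono : (M : ℝ) * Real.logb 2 ((k : ℝ) + 1)
        ≤ (M : ℝ) * Real.logb 2 ((∏ i ∈ S, w i : ℕ) : ℝ) := by
      have : ((k : ℝ) + 1) ≤ ((∏ i ∈ S, w i : ℕ) : ℝ) := by exact_mod_cast hP
      have hMpos : (0:ℝ) ≤ M := by positivity
      exact mul_le_mul_of_nonneg_left
        (Real.logb_le_logb_of_le (by norm_num) (by positivity) this) hMpos
    have hkey := key_ineq k hk
    have hMval : (M : ℝ) = (k : ℝ) * (m + 1) := by exact_mod_cast hM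
    -- combine
    have hfinal : (M : ℝ) * (Real.logb 2 ((k:ℝ) + 1) - Real.logb 2 k) < m + 1 := by
      nlinarith [hsumfloor, hcast, hceil, hmono, hcard]
    rw [hMval] at hfinal
    nlinarith [hkey, hm]
end

section
/- Let m ≥ 1 and k ≥ 2 be integers, let w : Fin m → ℕ with w i ≥ 1 for every i, and set M = k·(m+1). If S ⊆ Fin m satisfies ∑_{i∈S} ⌊M·log₂(w i)⌋ ≤ ⌈M·log₂ k⌉ and k ≤ ∏_{i∈S} w i, then ∏_{i∈S} w i = k. -/
/-- Backward direction of the Subset-Product reduction. -/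
theorem subset_product_reduction_backward
    (m k : ℕ) (hm : 1 ≤ m) (hk : 2 ≤ k)
    (w : Fin m → ℕ) (hw : ∀ i, 1 ≤ w i)
    (M : ℕ) (hM : M = k * (m + 1))
    (S : Finset (Fin m))
    (hbudget : (∑ i ∈ S, ⌊(M : ℝ) * Real.logb 2 (w i)⌋) ≤ ⌈(M : ℝ) * Real.logb 2 k⌉)
    (hprod : k ≤ ∏ i ∈ S, w i) :
    ∏ i ∈ S, w i = k := by
  set P : ℕ := ∏ i ∈ S, w i with hPdef
  have hkpos : (0:ℝ) < k := by positivity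
  have hPpos : 1 ≤ P := Finset.one_le_prod' fun i _ => hw i
  have hPR : (0:ℝ) < P := by exact_mod_cast hPpos
  have hb : (1:ℝ) < 2 := one_lt_two
  -- logb of the product equals the sum of logbs
  have hlogprod : Real.logb 2 (P:ℝ) = ∑ i ∈ S, Real.logb 2 (w i) := by
    rw [hPdef, Nat.cast_prod]
    exact Real.logb_prod S _ fun i _ => by
      exact_mod_cast Nat.one_le_iff_ne_zero.mp (hw i)
  -- main real inequality
  have hsum : (M:ℝ) * Real.logb 2 P < (M:ℝ) * Real.logb 2 k + (m + 1) := by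
    have h1 : (M:ℝ) * Real.logb 2 P ≤
        (∑ i ∈ S, (⌊(M : ℝ) * Real.logb 2 (w i)⌋ : ℝ)) + S.card := by
      rw [hlogprod, Finset.mul_sum]
      have : ∀ i ∈ S, (M:ℝ) * Real.logb 2 (w i) ≤
          (⌊(M : ℝ) * Real.logb 2 (w i)⌋ : ℝ) + 1 :=
        fun i _ => (Int.lt_floor_add_one _).le
      calc ∑ i ∈ S, (M:ℝ) * Real.logb 2 (w i)
          ≤ ∑ i ∈ S, ((⌊(M : ℝ) * Real.logb 2 (w i)⌋ : ℝ) + 1) :=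
            Finset.sum_le_sum this
        _ = (∑ i ∈ S, (⌊(M : ℝ) * Real.logb 2 (w i)⌋ : ℝ)) + S.card := by
            rw [Finset.sum_add_distrib, Finset.sum_const, nsmul_eq_mul, mul_one]
    have h2 : (∑ i ∈ S, (⌊(M : ℝ) * Real.logb 2 (w i)⌋ : ℝ)) ≤
        (⌈(M : ℝ) * Real.logb 2 k⌉ : ℝ) := by
      exact_mod_cast hbudget
    have h3 : ((⌈(M : ℝ) * Real.logb 2 k⌉ : ℝ)) < (M:ℝ) * Real.logb 2 k + 1 :=
      Int.ceil_lt_add_one _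
    have h4 : (S.card : ℝ) ≤ m := by
      exact_mod_cast (Finset.card_le_card (Finset.subset_univ S)).trans
        (le_of_eq (Finset.card_univ.trans (Fintype.card_fin m)))
    linarith
  -- divide by (m+1) using M = k (m+1)
  have hklog : (k:ℝ) * Real.logb 2 P < (k:ℝ) * Real.logb 2 k + 1 := by
    have hm1 : (0:ℝ) < (m:ℝ) + 1 := by positivity
    have : (k:ℝ) * ((m:ℝ)+1) * Real.logb 2 P <
        (k:ℝ) * ((m:ℝ)+1) * Real.logb 2 k + ((m:ℝ) + 1) := by
      have := hsum
      rw [hM] at this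
      push_cast at this
      linarith
    nlinarith [this]
  -- hence P^k < 2 * k^k
  have hpow : P ^ k < 2 * k ^ k := by
    have hlhs : Real.logb 2 ((P:ℝ) ^ k) = (k:ℝ) * Real.logb 2 P := by
      rw [Real.logb_pow]
    have hrhs : Real.logb 2 (2 * (k:ℝ) ^ k) = (k:ℝ) * Real.logb 2 k + 1 := by
      rw [Real.logb_mul two_ne_zero (by positivity), Real.logb_self_eq_one one_lt_two,
        Real.logb_pow]
      ring
    have hlt : Real.logb 2 ((P:ℝ) ^ k) < Real.logb 2 (2 * (k:ℝ) ^ k) := by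
      rw [hlhs, hrhs]; exact hklog
    have := (Real.logb_lt_logb_iff hb (by positivity) (by positivity)).mp hlt
    exact_mod_cast this
  -- Bernoulli: 2 * k^k ≤ (k+1)^k
  have hbern : 2 * k ^ k ≤ (k + 1) ^ k := by
    have hkR : (0:ℝ) < (k:ℝ) := hkpos
    have h1 : (1:ℝ) + (k:ℝ) * (1/(k:ℝ)) ≤ (1 + 1/(k:ℝ)) ^ k :=
      one_add_mul_le_pow (le_trans (by norm_num) (le_of_lt (by positivity : (0:ℝ) < 1/(k:ℝ)))) k
    have h2 : (2:ℝ) ≤ (1 + 1/(k:ℝ)) ^ k := by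
      rwa [mul_one_div, div_self hkR.ne', one_add_one_eq_two] at h1
    have h3 : (2:ℝ) * (k:ℝ) ^ k ≤ ((1 + 1/(k:ℝ)) * k) ^ k := by
      rw [mul_pow]
      exact mul_le_mul_of_nonneg_right h2 (by positivity)
    have h4 : (1 + 1/(k:ℝ)) * k = (k:ℝ) + 1 := by
      field_simp
    rw [h4] at h3
    exact_mod_cast h3
  -- conclude
  have hPle : P ≤ k := by
    by_contra h
    push_neg at h
    have : (k + 1) ^ k ≤ P ^ k := Nat.pow_le_pow_left h k
    omega
  omega
end

section
/- Let ξ be a real number with 0 ≤ ξ < 1, let d, T be natural numbers, and for each t ∈ {1,…,T} let A_t : Fin d → Fin d → ℝ be a matrix with nonnegative entries. Let x⁽⁰⁾ : Fin d → ℝ be nonnegative, set x̂⁽⁰⁾ = x⁽⁰⁾, define x⁽ᵗ⁾ = A_t · x⁽ᵗ⁻¹⁾ (matrix–vector product), and suppose x̂⁽ᵗ⁾ : Fin d → ℝ satisfies (1−ξ)·x̂⁽ᵗ⁾ i ≤ (A_t · x̂⁽ᵗ⁻¹⁾) i ≤ x̂⁽ᵗ⁾ i for every i and every t ≤ T. Then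 for every t ≤ T and every i, (1−ξ)^t · x̂⁽ᵗ⁾ i ≤ x⁽ᵗ⁾ i ≤ x̂⁽ᵗ⁾ i. -/
/-- Abstract rounding lemma for stage-dependent nonnegative linear updates. -/
theorem abstract_rounding_lemma
    (ξ : ℝ) (hξ0 : 0 ≤ ξ) (hξ1 : ξ < 1) (d T : ℕ)
    (A : ℕ → Fin d → Fin d → ℝ)
    (hA : ∀ t, 1 ≤ t → t ≤ T → ∀ i j, 0 ≤ A t i j)
    (x xhat : ℕ → Fin d → ℝ)
    (hx0 : ∀ i, 0 ≤ x 0 i)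
    (hxrec : ∀ t, 1 ≤ t → t ≤ T → ∀ i, x t i = ∑ j, A t i j * x (t - 1) j)
    (hxhat0 : xhat 0 = x 0)
    (hxhatrec : ∀ t, 1 ≤ t → t ≤ T → ∀ i,
      (1 - ξ) * xhat t i ≤ ∑ j, A t i j * xhat (t - 1) j ∧
      ∑ j, A t i j * xhat (t - 1) j ≤ xhat t i) :
    ∀ t, t ≤ T → ∀ i, (1 - ξ) ^ t * xhat t i ≤ x t i ∧ x t i ≤ xhat t i := by
  have h1ξ : (0:ℝ) ≤ 1 - ξ := by linarith
  intro t
  induction t with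
  | zero =>
    intro _ i
    simp [hxhat0]
  | succ t ih =>
    intro ht i
    have htT : t ≤ T := Nat.le_of_succ_le ht
    have ht1 : 1 ≤ t + 1 := Nat.le_add_left 1 t
    have hAn : ∀ i j, 0 ≤ A (t+1) i j := hA (t+1) ht1 ht
    have hxr := hxrec (t+1) ht1 ht i
    have hxhr := hxhatrec (t+1) ht1 ht i
    simp only [Nat.add_sub_cancel] at hxr hxhr
    constructor
    · have step1 : (1 - ξ) ^ (t+1) * xhat (t+1) i
          ≤ (1 - ξ) ^ t * ∑ j, A (t+1) i j * xhat t j := by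
        have := hxhr.1
        calc (1 - ξ) ^ (t+1) * xhat (t+1) i
            = (1 - ξ) ^ t * ((1 - ξ) * xhat (t+1) i) := by ring
          _ ≤ (1 - ξ) ^ t * ∑ j, A (t+1) i j * xhat t j :=
              mul_le_mul_of_nonneg_left this (pow_nonneg h1ξ t)
      have step2 : (1 - ξ) ^ t * ∑ j, A (t+1) i j * xhat t j ≤ x (t+1) i := by
        rw [hxr, Finset.mul_sum]
        apply Finset.sum_le_sum
        intro j _
        have := (ih htT j).1
        calc (1 - ξ) ^ t * (A (t+1) i j * xhat t j)
            = A (t+1) i j * ((1 - ξ) ^ t * xhat t j) := by ring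
          _ ≤ A (t+1) i j * x t j := mul_le_mul_of_nonneg_left this (hAn i j)
      linarith
    · rw [hxr]
      refine le_trans (Finset.sum_le_sum fun j _ => ?_) hxhr.2
      exact mul_le_mul_of_nonneg_left (ih htT j).2 (hAn i j)
end
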